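/- Assume κ ≠ 0, let b be real, and let n ≥ 0 be an integer. Then the function ψ_n(z) = (1+κ|z|²)^{−b/κ} z^n satisfies (L_κ^b ψ_n)(z) = b · ψ_n(z) for every z ∈ ℂ with 1 + κ|z|² > 0. -/

import Mathlib

open Complex MeasureTheory Filter

/-- Wirtinger derivative ∂f/∂z = (1/2)(∂f/∂x − i ∂f/∂y). -/
noncomputable def wderiv (f : ℂ → ℂ) (z : ℂ) : ℂ :=
  (fderiv ℝ f z 1 - Complex.I * fderiv ℝ f z Complex.I) / 2

/-- Anti-holomorphic Wirtinger derivative ∂f/∂z̄ = (1/2)(∂f/∂x + i ∂f/∂y). -/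
noncomputable def wderivBar (f : ℂ → ℂ) (z : ℂ) : ℂ :=
  (fderiv ℝ f z 1 + Complex.I * fderiv ℝ f z Complex.I) / 2

/-- Twisted Laplacian L_κ^ν. -/
noncomputable def twistedLap (κ ν : ℝ) (f : ℂ → ℂ) (z : ℂ) : ℂ :=
  -(((1 + κ * Complex.normSq z : ℝ) : ℂ) ^ 2 * wderiv (wderivBar f) z
    + (ν : ℂ) * ((1 + κ * Complex.normSq z : ℝ) : ℂ) *
        (z * wderiv f z - (starRingEnd ℂ) z * wderivBar f z)
    - (ν : ℂ) ^ 2 * ((Complex.normSq z : ℝ) : ℂ) * f z)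

/-- (∇_α f)(z) = −(1+κ|z|²) ∂f/∂z + α z̄ f(z). -/
noncomputable def nabla (κ α : ℝ) (f : ℂ → ℂ) (z : ℂ) : ℂ :=
  -((1 + κ * Complex.normSq z : ℝ) : ℂ) * wderiv f z + (α : ℂ) * (starRingEnd ℂ) z * f z

/-- (∇*_α f)(z) = (1+κ|z|²) ∂f/∂z̄ + (α−κ) z f(z). -/
noncomputable def nablaStar (κ α : ℝ) (f : ℂ → ℂ) (z : ℂ) : ℂ :=
  ((1 + κ * Complex.normSq z : ℝ) : ℂ) * wderivBar f z + ((α - κ : ℝ) : ℂ) * z * f z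

/-- ∇_{ν+κ} ∘ ∇_{ν+2κ} ∘ ⋯ ∘ ∇_{ν+mκ} (the identity when m = 0). -/
noncomputable def nablaChain (κ : ℝ) : ℕ → ℝ → (ℂ → ℂ) → (ℂ → ℂ)
  | 0, _, f => f
  | m + 1, ν, f => nabla κ (ν + κ) (nablaChain κ m (ν + κ) f)

/-- (D g)(z) = (1+κ|z|²)² ∂g/∂z. -/
noncomputable def Dop (κ : ℝ) (g : ℂ → ℂ) (z : ℂ) : ℂ :=
  ((1 + κ * Complex.normSq z : ℝ) : ℂ) ^ 2 * wderiv g z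

/-- Generalized binomial coefficient C(r,k) for real r. -/
noncomputable def genBinom (r : ℝ) (k : ℕ) : ℝ :=
  (∏ i ∈ Finset.range k, (r - i)) / (Nat.factorial k)

/-- Jacobi polynomial P_j^{(a,b)}(x) with real parameters a, b. -/
noncomputable def jacobiP (a b : ℝ) (j : ℕ) (x : ℝ) : ℝ :=
  ∑ s ∈ Finset.range (j + 1),
    genBinom ((j : ℝ) + a) (j - s) * genBinom ((j : ℝ) + b) s *
      ((x - 1) / 2) ^ s * ((x + 1) / 2) ^ (j - s)

/-- Pochhammer symbol (a)_n = a(a+1)⋯(a+n−1). -/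
noncomputable def risingFactorial (a : ℝ) (n : ℕ) : ℝ :=
  ∏ i ∈ Finset.range n, (a + i)

/-! Write `ψ = Φ(|w|²) wⁿ` with `Φ(t) = (1 + κt)^r`, `r = -b/κ`. For a radial function times a
holomorphic monomial the product rule gives `∂̄ψ = Φ'(|z|²) z^{n+1}` and
`∂ψ = Φ'(|z|²) z̄ zⁿ + Φ(|z|²) n z^{n-1}`. As `rκ = -b`, near `z` we get
`∂̄ψ = -b (1 + κ|w|²)^{r-1} w^{n+1}`, again of the same shape, so `∂∂̄ψ` comes from the same formula.
In `L ψ` the first-order part `z ∂ψ - z̄ ∂̄ψ` collapses to `n ψ`, and once every power of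
`1 + κ|z|²` is written as a polynomial multiple of `(1 + κ|z|²)^{r-2}` the eigenvalue equation is a
polynomial identity in `z` and `z̄`. -/

section Wirtinger

variable {f g : ℂ → ℂ} {z : ℂ}

lemma HasFDerivAt.wderiv_eq {L : ℂ →L[ℝ] ℂ} (h : HasFDerivAt f L z) :
    wderiv f z = (L 1 - I * L I) / 2 := by
  rw [wderiv, h.fderiv]

lemma HasFDerivAt.wderivBar_eq {L : ℂ →L[ℝ] ℂ} (h : HasFDerivAt f L z) :
    wderivBar f z = (L 1 + I * L I) / 2 := by
  rw [wderivBar, h.fderiv]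

lemma Filter.EventuallyEq.wderiv_eq (h : f =ᶠ[nhds z] g) : wderiv f z = wderiv g z := by
  rw [wderiv, wderiv, h.fderiv_eq]

lemma wderiv_mul (hf : DifferentiableAt ℝ f z) (hg : DifferentiableAt ℝ g z) :
    wderiv (fun w => f w * g w) z = wderiv f z * g z + f z * wderiv g z := by
  rw [wderiv, wderiv, wderiv, fderiv_fun_mul hf hg]
  simp only [add_apply, smul_apply, smul_eq_mul]
  ring

lemma wderivBar_mul (hf : DifferentiableAt ℝ f z) (hg : DifferentiableAt ℝ g z) :
    wderivBar (fun w => f w * g w) z = wderivBar f z * g z + f z * wderivBar g z := by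
  rw [wderivBar, wderivBar, wderivBar, fderiv_fun_mul hf hg]
  simp only [add_apply, smul_apply, smul_eq_mul]
  ring

lemma HasDerivAt.wderiv_eq {f' : ℂ} (h : HasDerivAt f f' z) : wderiv f z = f' := by
  rw [(h.hasFDerivAt.restrictScalars ℝ).wderiv_eq]
  simp only [ContinuousLinearMap.coe_restrictScalars', ContinuousLinearMap.toSpanSingleton_apply]
  linear_combination (-f' / 2) * I_sq

lemma HasDerivAt.wderivBar_eq {f' : ℂ} (h : HasDerivAt f f' z) : wderivBar f z = 0 := by
  rw [(h.hasFDerivAt.restrictScalars ℝ).wderivBar_eq]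
  simp only [ContinuousLinearMap.coe_restrictScalars', ContinuousLinearMap.toSpanSingleton_apply]
  linear_combination (f' / 2) * I_sq

lemma hasFDerivAt_normSq (z : ℂ) :
    HasFDerivAt (fun w => normSq w) ((2 * z.re) • reCLM + (2 * z.im) • imCLM) z := by
  have hre := reCLM.hasFDerivAt (x := z)
  have him := imCLM.hasFDerivAt (x := z)
  rw [show (fun w => normSq w) = fun w => reCLM w * reCLM w + imCLM w * imCLM w from
    funext normSq_apply]
  refine ((hre.mul hre).add (him.mul him)).congr_fderiv ?_
  ext v
  simp only [reCLM_apply, imCLM_apply, add_apply, smul_apply, smul_eq_mul]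
  ring

variable {φ : ℝ → ℝ} {φ' : ℝ}

lemma HasDerivAt.hasFDerivAt_ofReal_comp_normSq (hφ : HasDerivAt φ φ' (normSq z)) :
    HasFDerivAt (fun w => (φ (normSq w) : ℂ))
      (ofRealCLM.comp (φ' • ((2 * z.re) • reCLM + (2 * z.im) • imCLM))) z :=
  ofRealCLM.hasFDerivAt.comp z (hφ.comp_hasFDerivAt z (hasFDerivAt_normSq z))

lemma HasDerivAt.wderiv_ofReal_comp_normSq (hφ : HasDerivAt φ φ' (normSq z)) :
    wderiv (fun w => (φ (normSq w) : ℂ)) z = φ' * starRingEnd ℂ z := by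
  rw [hφ.hasFDerivAt_ofReal_comp_normSq.wderiv_eq]
  apply Complex.ext <;> simp <;> ring

lemma HasDerivAt.wderivBar_ofReal_comp_normSq (hφ : HasDerivAt φ φ' (normSq z)) :
    wderivBar (fun w => (φ (normSq w) : ℂ)) z = φ' * z := by
  rw [hφ.hasFDerivAt_ofReal_comp_normSq.wderivBar_eq]
  apply Complex.ext <;> simp <;> ring

lemma HasDerivAt.wderiv_ofReal_comp_normSq_mul_pow (hφ : HasDerivAt φ φ' (normSq z)) (n : ℕ) :
    wderiv (fun w => (φ (normSq w) : ℂ) * w ^ n) z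
      = φ' * starRingEnd ℂ z * z ^ n + φ (normSq z) * (n * z ^ (n - 1)) := by
  rw [wderiv_mul hφ.hasFDerivAt_ofReal_comp_normSq.differentiableAt
      ((differentiableAt_pow (𝕜 := ℂ) n).restrictScalars ℝ),
    hφ.wderiv_ofReal_comp_normSq, (hasDerivAt_pow n z).wderiv_eq]

lemma HasDerivAt.wderivBar_ofReal_comp_normSq_mul_pow (hφ : HasDerivAt φ φ' (normSq z)) (n : ℕ) :
    wderivBar (fun w => (φ (normSq w) : ℂ) * w ^ n) z = φ' * z ^ (n + 1) := by
  rw [wderivBar_mul hφ.hasFDerivAt_ofReal_comp_normSq.differentiableAt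
      ((differentiableAt_pow (𝕜 := ℂ) n).restrictScalars ℝ),
    hφ.wderivBar_ofReal_comp_normSq, (hasDerivAt_pow n z).wderivBar_eq]
  ring

end Wirtinger

lemma hasDerivAt_one_add_mul_rpow (κ r : ℝ) {t : ℝ} (ht : 1 + κ * t ≠ 0) :
    HasDerivAt (fun s => (1 + κ * s) ^ r) (r * κ * (1 + κ * t) ^ (r - 1)) t := by
  have h := (((hasDerivAt_id t).const_mul κ).const_add 1).rpow_const (p := r) (Or.inl ht)
  simp only [id, mul_one] at h
  convert h using 1
  ring

lemma mul_natCast_mul_pow_sub_one (z : ℂ) (n : ℕ) : z * (n * z ^ (n - 1)) = n * z ^ n := by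
  cases n with
  | zero => simp
  | succ k => simp only [Nat.add_sub_cancel, pow_succ]; ring

lemma eventuallyEq_wderivBar_one_add_mul_rpow_mul_pow (κ r : ℝ) (n : ℕ) {z : ℂ}
    (hz : 1 + κ * normSq z ≠ 0) :
    wderivBar (fun w => (((1 + κ * normSq w) ^ r : ℝ) : ℂ) * w ^ n)
      =ᶠ[nhds z] fun w => ((r * κ * (1 + κ * normSq w) ^ (r - 1) : ℝ) : ℂ) * w ^ (n + 1) := by
  filter_upwards [(continuous_const.add (continuous_const.mul continuous_normSq)).continuousAt
    |>.eventually_ne hz] with w hw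
  exact (hasDerivAt_one_add_mul_rpow κ r hw).wderivBar_ofReal_comp_normSq_mul_pow n

theorem stmt13 (κ : ℝ) (hκ : κ ≠ 0) (b : ℝ) (n : ℕ)
    (z : ℂ) (hz : 0 < 1 + κ * Complex.normSq z) :
    twistedLap κ b (fun w => (((1 + κ * Complex.normSq w) ^ (-(b / κ)) : ℝ) : ℂ) * w ^ n) z
      = (b : ℂ) * ((((1 + κ * Complex.normSq z) ^ (-(b / κ)) : ℝ) : ℂ) * z ^ n) := by
  set r := -(b / κ)
  have hrκ : r * κ = -b := by simp only [r]; field_simp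
  have hρ : 1 + κ * normSq z ≠ 0 := hz.ne'
  have hbar := eventuallyEq_wderivBar_one_add_mul_rpow_mul_pow κ r n hρ
  rw [hrκ] at hbar
  have hweight (p : ℝ) := hasDerivAt_one_add_mul_rpow κ p hρ
  rw [twistedLap, hbar.wderiv_eq,
    ((hweight (r - 1)).const_mul (-b)).wderiv_ofReal_comp_normSq_mul_pow,
    (hweight r).wderiv_ofReal_comp_normSq_mul_pow, (hweight r).wderivBar_ofReal_comp_normSq_mul_pow]
  obtain ⟨s, hs⟩ : ∃ s, s = (1 + κ * normSq z) ^ (r - 1 - 1) := ⟨_, rfl⟩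
  have hr1 : (1 + κ * normSq z) ^ (r - 1) = s * (1 + κ * normSq z) := by
    rw [hs, ← Real.rpow_add_one hρ, sub_add_cancel]
  have hr : (1 + κ * normSq z) ^ r = s * (1 + κ * normSq z) * (1 + κ * normSq z) := by
    rw [← hr1, ← Real.rpow_add_one hρ, sub_add_cancel]
  have hrκ' : (r : ℂ) * κ = -b := by exact_mod_cast hrκ
  simp only [hr1, hr, ← hs]
  push_cast
  rw [← mul_conj]
  linear_combination
    (b * (1 + κ * (z * starRingEnd ℂ z)) ^ 2 * s * starRingEnd ℂ z * z ^ (n + 1)) * hrκ'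
      - (b * (1 + κ * (z * starRingEnd ℂ z)) ^ 3 * s) * mul_natCast_mul_pow_sub_one z n
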